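/- Let φ be a profile over a finite set N, and let a, a' be two distinct individuals in a set S ⊆ T ⊆ N such that φ(a, a') = 1. Then for any set U ⊆ N \ T: S ⊆ f^CSR(φ, T ∪ U) if and only if (S \ {a'}) ⊆ f^CSR(φ, T ∪ U). (Correctness of the reduction rule that moves a' from S to T \ S.) -/

import Mathlib

/-!
The iteration defining `fCSR φ W` is increasing and stays inside `W`, so it reaches a fixed point
of `csrStep φ W` within `W.card` steps. Hence the socially qualified set is closed under
qualification: everyone in `W` qualified by a socially qualified individual is socially qualified.
Since `a ∈ S \ {a'}` qualifies `a'`, requiring `S \ {a'}` already forces `a'`.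
-/

open Finset

def csrStep {α : Type*} [DecidableEq α] (φ : α → α → Bool) (W K : Finset α) : Finset α :=
  K ∪ W.filter (fun a => ∃ a' ∈ K, φ a' a = true)

def csrIter {α : Type*} [DecidableEq α] (φ : α → α → Bool) (W : Finset α) : ℕ → Finset α
  | 0 => W.filter (fun a => ∀ a' ∈ W, φ a' a = true)
  | n + 1 => csrStep φ W (csrIter φ W n)

/-- The consensus-start-respecting rule. -/
def fCSR {α : Type*} [DecidableEq α] (φ : α → α → Bool) (W : Finset α) : Finset α :=
  csrIter φ W W.card

def lsrIter {α : Type*} [DecidableEq α] (φ : α → α → Bool) (W : Finset α) : ℕ → Finset α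
  | 0 => W.filter (fun a => φ a a = true)
  | n + 1 => csrStep φ W (lsrIter φ W n)

/-- The liberal-start-respecting rule. -/
def fLSR {α : Type*} [DecidableEq α] (φ : α → α → Bool) (W : Finset α) : Finset α :=
  lsrIter φ W W.card

section CSR

variable {α : Type*} [DecidableEq α] (φ : α → α → Bool) (W : Finset α)

lemma csrIter_subset_succ (n : ℕ) : csrIter φ W n ⊆ csrIter φ W (n + 1) :=
  subset_union_left

lemma csrIter_subset (n : ℕ) : csrIter φ W n ⊆ W := by
  induction n with
  | zero => exact filter_subset _ _
  | succ n ih => exact union_subset ih (filter_subset _ _)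

lemma csrIter_eq_of_le {n m : ℕ} (hn : csrIter φ W n = csrIter φ W (n + 1)) (hm : n ≤ m) :
    csrIter φ W m = csrIter φ W n := by
  induction m, hm using Nat.le_induction with
  | base => rfl
  | succ m _ ih =>
    calc csrIter φ W (m + 1) = csrStep φ W (csrIter φ W m) := rfl
      _ = csrIter φ W (n + 1) := by rw [ih]; rfl
      _ = csrIter φ W n := hn.symm

lemma le_card_csrIter {n : ℕ} (h : ∀ m < n, csrIter φ W m ≠ csrIter φ W (m + 1)) :
    n ≤ (csrIter φ W n).card := by
  induction n with
  | zero => exact Nat.zero_le _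
  | succ n ih =>
    have hlt : (csrIter φ W n).card < (csrIter φ W (n + 1)).card :=
      card_lt_card ((csrIter_subset_succ φ W n).ssubset_of_ne (h n n.lt_succ_self))
    have := ih fun m hm => h m (hm.trans n.lt_succ_self)
    omega

lemma csrStep_fCSR : csrStep φ W (fCSR φ W) = fCSR φ W := by
  by_contra hne
  have hstrict : ∀ m < W.card + 1, csrIter φ W m ≠ csrIter φ W (m + 1) := by
    intro m hm heq
    apply hne
    change csrIter φ W (W.card + 1) = csrIter φ W W.card
    rw [csrIter_eq_of_le φ W heq hm.le, csrIter_eq_of_le φ W heq (Nat.le_of_lt_succ hm)]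
  have := (le_card_csrIter φ W hstrict).trans (card_le_card (csrIter_subset φ W _))
  omega

variable {φ W}

lemma mem_fCSR_of_qualified {b c : α} (hb : b ∈ fCSR φ W) (hc : c ∈ W) (hbc : φ b c = true) :
    c ∈ fCSR φ W := by
  rw [← csrStep_fCSR]
  exact mem_union_right _ (mem_filter.2 ⟨hc, b, hb, hbc⟩)

end CSR

theorem csr_reduction_rule_correct_general
    {α : Type*} [DecidableEq α] (φ : α → α → Bool)
    (S T : Finset α) (hST : S ⊆ T) (a a' : α)
    (haS : a ∈ S) (ha'S : a' ∈ S) (hne : a ≠ a') (hq : φ a a' = true)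
    (U : Finset α) :
    S ⊆ fCSR φ (T ∪ U) ↔ (S \ {a'}) ⊆ fCSR φ (T ∪ U) := by
  refine ⟨sdiff_subset.trans, fun h x hx => ?_⟩
  by_cases hx' : x = a'
  · subst hx'
    have ha : a ∈ fCSR φ (T ∪ U) := h (by simp [haS, hne])
    exact mem_fCSR_of_qualified ha (mem_union_left _ (hST ha'S)) hq
  · exact h (by simp [hx, hx'])

theorem csr_reduction_rule_correct
    {α : Type*} [DecidableEq α] (φ : α → α → Bool)
    (S T : Finset α) (hST : S ⊆ T) (a a' : α)
    (haS : a ∈ S) (ha'S : a' ∈ S) (hne : a ≠ a') (hq : φ a a' = true)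
    (U : Finset α) (hU : Disjoint U T) :
    S ⊆ fCSR φ (T ∪ U) ↔ (S \ {a'}) ⊆ fCSR φ (T ∪ U) :=
  csr_reduction_rule_correct_general φ S T hST a a' haS ha'S hne hq U
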